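/- arXiv:2108.12272 — 5 statements merged into one kernel-verified Lean document; each statement's English description precedes it below -/
import Mathlib

section
/- (First projection lemma) Let V = W⁰ ⊕ W¹ ⊕ W² ⊕ ⋯ be a near inner decomposition of a closed subspace V of a valuation Hilbert module H over a valuation algebra R. Let r ∈ R₁, h ∈ W^k, and suppose f = g⁰ + g¹ + ⋯ + g^m with g^j ∈ W^j, and ord(rh − f) > m. Then f is the orthogonal projection of rh onto W = W⁰ ⊕ ⋯ ⊕ W^m, and ‖f‖² = Σ_{j=0}^m ‖g^j‖² ≤ ‖rh‖². -/
/-!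
The hypothesis `ord (r • h - f) > m` is exactly what near innerness needs to make the residual
`r • h - f` orthogonal to each `W j` with `j ≤ m`, hence to their span, which contains `f`.
So `f` is the orthogonal projection of `r • h`; the norm identity is Pythagoras for the pairwise
orthogonal `g j`, and the inequality is Pythagoras for `r • h = f + (r • h - f)`.
-/

open Submodule

section InnerProductSpace

variable {𝕜 E : Type*} [RCLike 𝕜] [NormedAddCommGroup E] [InnerProductSpace 𝕜 E]

theorem inner_eq_zero_of_mem_span {x : E} {s : Set E} (hs : ∀ w ∈ s, inner 𝕜 x w = 0)
    {w : E} (hw : w ∈ span 𝕜 s) : inner 𝕜 x w = 0 :=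
  mem_orthogonal_singleton_iff_inner_right.mp <|
    span_le.mpr (fun v hv => mem_orthogonal_singleton_iff_inner_right.mpr (hs v hv)) hw

theorem norm_sum_sq_eq_sum_norm_sq_of_pairwise {ι : Type*} (s : Finset ι) {v : ι → E}
    (hv : (s : Set ι).Pairwise fun i j => inner 𝕜 (v i) (v j) = 0) :
    ‖∑ i ∈ s, v i‖ ^ 2 = ∑ i ∈ s, ‖v i‖ ^ 2 := by
  classical
  induction s using Finset.induction_on with
  | empty => simp
  | insert a s ha ih =>
    have hperp : inner 𝕜 (v a) (∑ i ∈ s, v i) = 0 := by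
      rw [inner_sum]
      refine Finset.sum_eq_zero fun i hi => hv ?_ ?_ ?_
      · simp
      · simp [hi]
      · rintro rfl; exact ha hi
    rw [Finset.sum_insert ha, Finset.sum_insert ha, norm_add_sq (𝕜 := 𝕜), hperp,
      ih (hv.mono (by simp)), map_zero, mul_zero, add_zero]

theorem norm_sq_le_norm_sq_of_inner_sub_eq_zero {x y : E} (h : inner 𝕜 (x - y) y = 0) :
    ‖y‖ ^ 2 ≤ ‖x‖ ^ 2 := by
  have hdecomp : x = y + (x - y) := (add_sub_cancel y x).symm
  calc ‖y‖ ^ 2 ≤ ‖y‖ ^ 2 + ‖x - y‖ ^ 2 := le_add_of_nonneg_right (sq_nonneg _)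
    _ = ‖x‖ ^ 2 := by
      rw [hdecomp, norm_add_sq (𝕜 := 𝕜), inner_eq_zero_symm.mp h, add_sub_cancel_left]
      simp

end InnerProductSpace

section NearInner

variable {𝕜 R H : Type*} [RCLike 𝕜] [NormedAddCommGroup H] [InnerProductSpace 𝕜 H]
  [Ring R] [Module R H]

def IsNearInner (ordR : R → ℕ∞) (ord : H → ℕ∞) (V : Submodule 𝕜 H) (W : ℕ → Submodule 𝕜 H) :
    Prop :=
  ∀ (k m : ℕ), ∀ h ∈ W k, ∀ g ∈ V, ∀ r : R, 1 ≤ ordR r →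
    (m : ℕ∞) < ord (r • h + g) → ∀ w ∈ W m, inner 𝕜 (r • h + g) w = 0

variable {ordR : R → ℕ∞} {ord : H → ℕ∞} {V : Submodule 𝕜 H} {W : ℕ → Submodule 𝕜 H}

theorem IsNearInner.inner_smul_sub_eq_zero (hNI : IsNearInner ordR ord V W) {r : R}
    (hr : 1 ≤ ordR r) {k : ℕ} {h : H} (hh : h ∈ W k) {f : H} (hf : f ∈ V) {m : ℕ}
    (hord : (m : ℕ∞) < ord (r • h - f)) {j : ℕ} (hj : j ≤ m) {w : H} (hw : w ∈ W j) :
    inner 𝕜 (r • h - f) w = 0 := by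
  rw [sub_eq_add_neg] at hord ⊢
  exact hNI k j h hh (-f) (neg_mem hf) r hr ((Nat.cast_le.mpr hj).trans_lt hord) w hw

theorem IsNearInner.inner_smul_sub_eq_zero_of_mem_span (hNI : IsNearInner ordR ord V W) {r : R}
    (hr : 1 ≤ ordR r) {k : ℕ} {h : H} (hh : h ∈ W k) {f : H} (hf : f ∈ V) {m : ℕ}
    (hord : (m : ℕ∞) < ord (r • h - f)) {w : H}
    (hw : w ∈ span 𝕜 (⋃ j ∈ Set.Iic m, (W j : Set H))) :
    inner 𝕜 (r • h - f) w = 0 := by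
  refine inner_eq_zero_of_mem_span (fun v hv => ?_) hw
  obtain ⟨j, hj, hvj⟩ := Set.mem_iUnion₂.mp hv
  exact hNI.inner_smul_sub_eq_zero hr hh hf hord hj hvj

end NearInner

theorem first_projection_lemma_general
    {R : Type*} [Ring R]
    {H : Type*} [NormedAddCommGroup H] [InnerProductSpace ℂ H]
    [Module R H]
    (ordR : R → ℕ∞) (ord : H → ℕ∞)
    -- `V` is a closed subspace with a near inner decomposition `W`
    (V : Submodule ℂ H)
    (W : ℕ → Submodule ℂ H)
    (hWV : ∀ n, W n ≤ V)
    (horth : ∀ i j : ℕ, i ≠ j → ∀ x ∈ W i, ∀ y ∈ W j, (inner ℂ x y : ℂ) = 0)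
    (hNI : ∀ (k m : ℕ), ∀ h ∈ W k, ∀ g ∈ V, ∀ r : R, 1 ≤ ordR r →
      (m : ℕ∞) < ord (r • h + g) → ∀ w ∈ W m, (inner ℂ (r • h + g) w : ℂ) = 0)
    -- the data of the lemma
    (r : R) (hr : 1 ≤ ordR r) (k : ℕ) (h : H) (hh : h ∈ W k)
    (m : ℕ) (g : ℕ → H) (hg : ∀ j ≤ m, g j ∈ W j)
    (f : H) (hf : f = ∑ j ∈ Finset.range (m + 1), g j)
    (hord : (m : ℕ∞) < ord (r • h - f)) :
    (∀ w ∈ Submodule.span ℂ (⋃ j ∈ Set.Iic m, (W j : Set H)),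
      (inner ℂ (r • h - f) w : ℂ) = 0) ∧
    ‖f‖ ^ 2 = ∑ j ∈ Finset.range (m + 1), ‖g j‖ ^ 2 ∧
    ‖f‖ ^ 2 ≤ ‖r • h‖ ^ 2 := by
  have hgW : ∀ j ∈ Finset.range (m + 1), g j ∈ W j := fun j hj =>
    hg j (Finset.mem_range_succ_iff.mp hj)
  have hfV : f ∈ V := hf ▸ sum_mem fun j hj => hWV j (hgW j hj)
  have hfspan : f ∈ span ℂ (⋃ j ∈ Set.Iic m, (W j : Set H)) :=
    hf ▸ sum_mem fun j hj => subset_span <|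
      Set.mem_biUnion (Finset.mem_range_succ_iff.mp hj) (hgW j hj)
  have hperp : ∀ w ∈ span ℂ (⋃ j ∈ Set.Iic m, (W j : Set H)), inner ℂ (r • h - f) w = 0 :=
    fun _ => IsNearInner.inner_smul_sub_eq_zero_of_mem_span hNI hr hh hfV hord
  refine ⟨hperp, ?_, norm_sq_le_norm_sq_of_inner_sub_eq_zero (hperp f hfspan)⟩
  exact hf ▸ norm_sum_sq_eq_sum_norm_sq_of_pairwise _ fun i hi j hj hij =>
    horth i j hij _ (hgW i hi) _ (hgW j hj)

/-- first projection lemma: in a near inner decomposition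
`V = W⁰ ⊕ W¹ ⊕ ⋯`, if `r ∈ R₁`, `h ∈ W^k`, `f = g⁰ + ⋯ + g^m` with `g^j ∈ W^j`,
and `ord (r•h - f) > m`, then `f` is the orthogonal projection of `r•h` onto
`W⁰ ⊕ ⋯ ⊕ W^m`, and `‖f‖² = Σ_{j≤m} ‖g^j‖² ≤ ‖r•h‖²`. -/
theorem first_projection_lemma
    {R : Type*} [Ring R] [Algebra ℂ R]
    {H : Type*} [NormedAddCommGroup H] [InnerProductSpace ℂ H] [CompleteSpace H]
    [Module R H] [IsScalarTower ℂ R H]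
    (ordR : R → ℕ∞) (ord : H → ℕ∞)
    -- analytic valuation axioms
    (hR0 : ∀ r : R, ordR r = ⊤ ↔ r = 0)
    (hRmul : ∀ r s : R, ordR r + ordR s ≤ ordR (r * s))
    (hRsmul : ∀ (c : ℂ) (r : R), c ≠ 0 → ordR (c • r) = ordR r)
    (hRadd : ∀ r s : R, min (ordR r) (ordR s) ≤ ordR (r + s))
    (h0 : ∀ x : H, ord x = ⊤ ↔ x = 0)
    (hmul : ∀ (r : R) (x : H), ordR r + ord x ≤ ord (r • x))
    (hsmul : ∀ (c : ℂ) (x : H), c ≠ 0 → ord (c • x) = ord x)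
    (hadd : ∀ x y : H, min (ord x) (ord y) ≤ ord (x + y))
    (husc : UpperSemicontinuous ord)
    -- `V` is a closed subspace with a near inner decomposition `W`
    (V : Submodule ℂ H) (hVc : IsClosed (V : Set H))
    (W : ℕ → Submodule ℂ H)
    (hWV : ∀ n, W n ≤ V)
    (horth : ∀ i j : ℕ, i ≠ j → ∀ x ∈ W i, ∀ y ∈ W j, (inner ℂ x y : ℂ) = 0)
    (hspan : (V : Set H) =
      closure (Submodule.span ℂ (⋃ n : ℕ, (W n : Set H)) : Set H))
    (hNI : ∀ (k m : ℕ), ∀ h ∈ W k, ∀ g ∈ V, ∀ r : R, 1 ≤ ordR r →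
      (m : ℕ∞) < ord (r • h + g) → ∀ w ∈ W m, (inner ℂ (r • h + g) w : ℂ) = 0)
    -- the data of the lemma
    (r : R) (hr : 1 ≤ ordR r) (k : ℕ) (h : H) (hh : h ∈ W k)
    (m : ℕ) (g : ℕ → H) (hg : ∀ j ≤ m, g j ∈ W j)
    (f : H) (hf : f = ∑ j ∈ Finset.range (m + 1), g j)
    (hord : (m : ℕ∞) < ord (r • h - f)) :
    (∀ w ∈ Submodule.span ℂ (⋃ j ∈ Set.Iic m, (W j : Set H)),
      (inner ℂ (r • h - f) w : ℂ) = 0) ∧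
    ‖f‖ ^ 2 = ∑ j ∈ Finset.range (m + 1), ‖g j‖ ^ 2 ∧
    ‖f‖ ^ 2 ≤ ‖r • h‖ ^ 2 :=
  first_projection_lemma_general ordR ord V W hWV horth hNI r hr k h hh m g hg f hf hord
end

section
/- (Second projection lemma) Let V = W⁰ ⊕ W¹ ⊕ ⋯ be a near inner decomposition of a closed subspace V of a valuation Hilbert module H over a valuation algebra R. Let r ∈ R₁ and h ∈ W^k. Suppose g^j ∈ W^j for j ≥ 0, and with f^m = g⁰ + ⋯ + g^m one has ord(rh − f^m) > m for every m ∈ ℤ≥0. Then the series Σ_j g^j converges in norm to an element f ∈ V, and rh = f; in particular rh ∈ V. -/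
/-!
Each residual `r • h - (g⁰ + ⋯ + gᵐ)` has order `> m`, so by the near inner property it is
orthogonal to `W⁰, …, Wᵐ` and hence to every later increment of the partial sums. Pythagoras then
makes the squared residual norms decrease, and their decrements bound the squared distances
between partial sums, so the series converges; its limit lies in the closed space `V`. The
residuals converge to `r • h - f` while their orders tend to `⊤`, and upper semicontinuity of
`ord` forces `ord (r • h - f) = ⊤`, i.e. `r • h = f`.
-/

open Filter Topology Finset

theorem cauchySeq_of_sq_dist_le_sub {α : Type*} [PseudoMetricSpace α] {s : ℕ → α} {a : ℕ → ℝ}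
    (ha : CauchySeq a) (h : ∀ m n, m ≤ n → dist (s m) (s n) ^ 2 ≤ a m - a n) :
    CauchySeq s := by
  rw [Metric.cauchySeq_iff'] at ha ⊢
  intro ε hε
  obtain ⟨N, hN⟩ := ha (ε ^ 2) (by positivity)
  refine ⟨N, fun n hn => ?_⟩
  have : dist (s n) (s N) ^ 2 < ε ^ 2 := calc
    dist (s n) (s N) ^ 2 ≤ a N - a n := by rw [dist_comm]; exact h N n hn
    _ ≤ dist (a n) (a N) := by rw [Real.dist_eq, abs_sub_comm]; exact le_abs_self _
    _ < ε ^ 2 := hN n hn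
  exact lt_of_pow_lt_pow_left₀ 2 hε.le this

theorem cauchySeq_sum_range_of_inner_sub_sum_range_eq_zero {𝕜 E : Type*} [RCLike 𝕜]
    [NormedAddCommGroup E] [InnerProductSpace 𝕜 E] {x : E} {g : ℕ → E}
    (h : ∀ n j, j < n → inner 𝕜 (x - ∑ i ∈ range n, g i) (g j) = 0) :
    CauchySeq fun n => ∑ i ∈ range n, g i := by
  set s : ℕ → E := fun n => ∑ i ∈ range n, g i
  have pythagoras : ∀ m n, m ≤ n → ‖x - s m‖ ^ 2 = ‖x - s n‖ ^ 2 + ‖s n - s m‖ ^ 2 := by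
    intro m n hmn
    have hperp : inner 𝕜 (x - s n) (s n - s m) = 0 := by
      rw [← sum_Ico_eq_sub _ hmn, inner_sum]
      exact sum_eq_zero fun j hj => h n j (mem_Ico.mp hj).2
    rw [← sub_add_sub_cancel x (s n) (s m), @norm_add_sq 𝕜, hperp]
    simp
  have hanti : Antitone fun m => ‖x - s m‖ ^ 2 := fun m n hmn =>
    (le_add_of_nonneg_right (sq_nonneg _)).trans_eq (pythagoras m n hmn).symm
  have hbdd : BddBelow (Set.range fun m => ‖x - s m‖ ^ 2) :=
    ⟨0, Set.forall_mem_range.mpr fun m => sq_nonneg _⟩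
  refine cauchySeq_of_sq_dist_le_sub (tendsto_atTop_ciInf hanti hbdd).cauchySeq fun m n hmn => ?_
  rw [pythagoras m n hmn, dist_eq_norm']
  linarith

theorem UpperSemicontinuous.eq_top_of_tendsto {X β ι : Type*} [TopologicalSpace X]
    [CompleteLinearOrder β] [TopologicalSpace β] [OrderTopology β]
    {f : X → β} (hf : UpperSemicontinuous f) {l : Filter ι} [l.NeBot] {u : ι → X} {x : X}
    (hu : Tendsto u l (𝓝 x)) (hfu : Tendsto (f ∘ u) l (𝓝 ⊤)) : f x = ⊤ := by
  refine top_le_iff.mp ?_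
  calc ⊤ = limsup (f ∘ u) l := hfu.limsup_eq.symm
    _ = limsup f (map u l) := limsup_comp f u l
    _ ≤ limsup f (𝓝 x) := limsup_le_limsup_of_le hu
    _ ≤ f x := hf.limsup_le x

theorem second_projection_lemma_general
    {R : Type*} [Ring R]
    {H : Type*} [NormedAddCommGroup H] [InnerProductSpace ℂ H] [CompleteSpace H]
    [Module R H]
    (ordR : R → ℕ∞) (ord : H → ℕ∞)
    (h0 : ∀ x : H, ord x = ⊤ ↔ x = 0)
    (husc : UpperSemicontinuous ord)
    (V : Submodule ℂ H) (hVc : IsClosed (V : Set H))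
    (W : ℕ → Submodule ℂ H)
    (hWV : ∀ n, W n ≤ V)
    (hNI : ∀ (k m : ℕ), ∀ h ∈ W k, ∀ g ∈ V, ∀ r : R, 1 ≤ ordR r →
      (m : ℕ∞) < ord (r • h + g) → ∀ w ∈ W m, (inner ℂ (r • h + g) w : ℂ) = 0)
    (r : R) (hr : 1 ≤ ordR r) (k : ℕ) (h : H) (hh : h ∈ W k)
    (g : ℕ → H) (hg : ∀ j : ℕ, g j ∈ W j)
    (hord : ∀ m : ℕ, (m : ℕ∞) < ord (r • h - ∑ j ∈ Finset.range (m + 1), g j)) :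
    ∃ f : H, f ∈ V ∧
      Tendsto (fun n : ℕ => ∑ j ∈ Finset.range n, g j) atTop (nhds f) ∧
      r • h = f := by
  have hsumV : ∀ n, ∑ j ∈ range n, g j ∈ V := fun n => V.sum_mem fun j _ => hWV j (hg j)
  have hresidual : ∀ n j, j < n → inner ℂ (r • h - ∑ i ∈ range n, g i) (g j) = 0 := by
    rintro (_ | m) j hj
    · exact absurd hj j.not_lt_zero
    have hjm : (j : ℕ∞) < ord (r • h - ∑ i ∈ range (m + 1), g i) :=
      (Nat.cast_le.mpr (Nat.le_of_lt_succ hj)).trans_lt (hord m)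
    rw [sub_eq_add_neg] at hjm ⊢
    exact hNI k j h hh _ (V.neg_mem (hsumV _)) r hr hjm (g j) (hg j)
  obtain ⟨f, hf⟩ := cauchySeq_tendsto_of_complete
    (cauchySeq_sum_range_of_inner_sub_sum_range_eq_zero hresidual)
  have hordTop : ord (r • h - f) = ⊤ :=
    husc.eq_top_of_tendsto ((hf.comp (tendsto_add_atTop_nat 1)).const_sub (r • h))
      (tendsto_nhds_top_mono' ENat.tendsto_natCast_nhds_top fun m => (hord m).le)
  exact ⟨f, hVc.mem_of_tendsto hf (Eventually.of_forall hsumV), hf,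
    sub_eq_zero.mp ((h0 _).mp hordTop)⟩

/-- second projection lemma: in a near inner decomposition
`V = W⁰ ⊕ W¹ ⊕ ⋯`, if `r ∈ R₁`, `h ∈ W^k`, `g^j ∈ W^j`, and
`ord (r•h - (g⁰ + ⋯ + g^m)) > m` for every `m`, then `Σ_j g^j` converges in
norm to an element `f ∈ V` with `r•h = f`; in particular `r•h ∈ V`. -/
theorem second_projection_lemma
    {R : Type*} [Ring R] [Algebra ℂ R]
    {H : Type*} [NormedAddCommGroup H] [InnerProductSpace ℂ H] [CompleteSpace H]
    [Module R H] [IsScalarTower ℂ R H]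
    (ordR : R → ℕ∞) (ord : H → ℕ∞)
    (hR0 : ∀ r : R, ordR r = ⊤ ↔ r = 0)
    (hRmul : ∀ r s : R, ordR r + ordR s ≤ ordR (r * s))
    (hRsmul : ∀ (c : ℂ) (r : R), c ≠ 0 → ordR (c • r) = ordR r)
    (hRadd : ∀ r s : R, min (ordR r) (ordR s) ≤ ordR (r + s))
    (h0 : ∀ x : H, ord x = ⊤ ↔ x = 0)
    (hmul : ∀ (r : R) (x : H), ordR r + ord x ≤ ord (r • x))
    (hsmul : ∀ (c : ℂ) (x : H), c ≠ 0 → ord (c • x) = ord x)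
    (hadd : ∀ x y : H, min (ord x) (ord y) ≤ ord (x + y))
    (husc : UpperSemicontinuous ord)
    (V : Submodule ℂ H) (hVc : IsClosed (V : Set H))
    (W : ℕ → Submodule ℂ H)
    (hWV : ∀ n, W n ≤ V)
    (horth : ∀ i j : ℕ, i ≠ j → ∀ x ∈ W i, ∀ y ∈ W j, (inner ℂ x y : ℂ) = 0)
    (hspan : (V : Set H) =
      closure (Submodule.span ℂ (⋃ n : ℕ, (W n : Set H)) : Set H))
    (hNI : ∀ (k m : ℕ), ∀ h ∈ W k, ∀ g ∈ V, ∀ r : R, 1 ≤ ordR r →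
      (m : ℕ∞) < ord (r • h + g) → ∀ w ∈ W m, (inner ℂ (r • h + g) w : ℂ) = 0)
    (r : R) (hr : 1 ≤ ordR r) (k : ℕ) (h : H) (hh : h ∈ W k)
    (g : ℕ → H) (hg : ∀ j : ℕ, g j ∈ W j)
    (hord : ∀ m : ℕ, (m : ℕ∞) < ord (r • h - ∑ j ∈ Finset.range (m + 1), g j)) :
    ∃ f : H, f ∈ V ∧
      Tendsto (fun n : ℕ => ∑ j ∈ Finset.range n, g j) atTop (nhds f) ∧
      r • h = f :=
  second_projection_lemma_general ordR ord h0 husc V hVc W hWV hNI r hr k h hh g hg hord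
end

section
/- If V is a closed R₁-invariant subspace of a valuation Hilbert module H over a valuation algebra R (i.e., R₁·V ⊆ V), then the near homogeneous decomposition V = W₀ ⊕ W₁ ⊕ ⋯ of V is a near inner decomposition: whenever h ∈ W_k, g ∈ V, r ∈ R₁, and ord(rh + g) > m, then rh + g ⟂ W_m. -/
variable {H : Type*} [NormedAddCommGroup H] [InnerProductSpace ℂ H]

/-- The valuation subspace series `V_k = {h ∈ V : ord h ≥ k}`. -/
def valSeries (ord : H → ℕ∞) (V : Submodule ℂ H) (k : ℕ) : Set H :=
  {x | x ∈ V ∧ (k : ℕ∞) ≤ ord x}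

/-- The near homogeneous components `W_k = V_k ⊖ V_{k+1}`. -/
def nearHomog (ord : H → ℕ∞) (V : Submodule ℂ H) (k : ℕ) : Set H :=
  {x | x ∈ valSeries ord V k ∧ ∀ y ∈ valSeries ord V (k + 1), (inner ℂ x y : ℂ) = 0}

/-! `R₁`-invariance puts `r • h + g` in `V`, and as `ord` is `ℕ∞`-valued, `ord > m` means
`ord ≥ m + 1`; so `r • h + g ∈ V_{m+1}`, to which `W_m` is orthogonal by definition. -/

lemma mem_valSeries_succ_of_lt {ord : H → ℕ∞} {V : Submodule ℂ H} {m : ℕ} {x : H}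
    (hx : x ∈ V) (hlt : (m : ℕ∞) < ord x) : x ∈ valSeries ord V (m + 1) :=
  ⟨hx, by exact_mod_cast Order.add_one_le_of_lt hlt⟩

lemma inner_eq_zero_of_mem_valSeries_succ {ord : H → ℕ∞} {V : Submodule ℂ H} {m : ℕ} {x w : H}
    (hx : x ∈ valSeries ord V (m + 1)) (hw : w ∈ nearHomog ord V m) :
    (inner ℂ x w : ℂ) = 0 :=
  inner_eq_zero_symm.mp (hw.2 x hx)

theorem invariant_implies_nearInner_general
    {R : Type*} [Ring R]
    [Module R H]
    (ordR : R → ℕ∞) (ord : H → ℕ∞)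
    (V : Submodule ℂ H)
    (hinv : ∀ r : R, 1 ≤ ordR r → ∀ v ∈ V, r • v ∈ V) :
    ∀ (k m : ℕ), ∀ h ∈ nearHomog ord V k, ∀ g ∈ V, ∀ r : R, 1 ≤ ordR r →
      (m : ℕ∞) < ord (r • h + g) →
      ∀ w ∈ nearHomog ord V m, (inner ℂ (r • h + g) w : ℂ) = 0 := by
  intro k m h hh g hg r hr hord w hw
  have hV : r • h + g ∈ V := V.add_mem (hinv r hr h hh.1.1) hg
  exact inner_eq_zero_of_mem_valSeries_succ (mem_valSeries_succ_of_lt hV hord) hw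

/-- if `V` is a closed `R₁`-invariant subspace, then its near
homogeneous decomposition is near inner. -/
theorem invariant_implies_nearInner
    {R : Type*} [Ring R] [Algebra ℂ R] [CompleteSpace H]
    [Module R H] [IsScalarTower ℂ R H]
    (ordR : R → ℕ∞) (ord : H → ℕ∞)
    (hR0 : ∀ r : R, ordR r = ⊤ ↔ r = 0)
    (hRmul : ∀ r s : R, ordR r + ordR s ≤ ordR (r * s))
    (hRsmul : ∀ (c : ℂ) (r : R), c ≠ 0 → ordR (c • r) = ordR r)
    (hRadd : ∀ r s : R, min (ordR r) (ordR s) ≤ ordR (r + s))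
    (h0 : ∀ x : H, ord x = ⊤ ↔ x = 0)
    (hmul : ∀ (r : R) (x : H), ordR r + ord x ≤ ord (r • x))
    (hsmul : ∀ (c : ℂ) (x : H), c ≠ 0 → ord (c • x) = ord x)
    (hadd : ∀ x y : H, min (ord x) (ord y) ≤ ord (x + y))
    (husc : UpperSemicontinuous ord)
    (V : Submodule ℂ H) (hVc : IsClosed (V : Set H))
    (hinv : ∀ r : R, 1 ≤ ordR r → ∀ v ∈ V, r • v ∈ V) :
    ∀ (k m : ℕ), ∀ h ∈ nearHomog ord V k, ∀ g ∈ V, ∀ r : R, 1 ≤ ordR r →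
      (m : ℕ∞) < ord (r • h + g) →
      ∀ w ∈ nearHomog ord V m, (inner ℂ (r • h + g) w : ℂ) = 0 :=
  invariant_implies_nearInner_general ordR ord V hinv
end

section
/- If V is a closed R₁-invariant subspace of a valuation Hilbert module H, then the near homogeneous decomposition of V has the full projection property: for all k, m ∈ ℤ≥0, r ∈ R₁, h ∈ W_k, g ∈ V with ord(rh + g) ≥ m, we have P_m^H(rh + g) ∈ P_m^H(W_m), where P_m^H is the orthogonal projection of H onto its m-th near homogeneous component H_m. -/
variable {H : Type*} [NormedAddCommGroup H] [InnerProductSpace ℂ H]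

/-!
Invariance puts `x = r • h + g` in `V_m`, so it suffices that `P_m^H (V_m) ⊆ P_m^H (W_m)`.
Upper semicontinuity of `ord` makes `V_{m+1}` closed, so `x = w + y` with `y` the orthogonal
projection of `x` onto `V_{m+1}` and `w ∈ W_m`. As `y ∈ H_{m+1}` is orthogonal to `H_m`,
`x` and `w` have the same projection onto `H_m`.
-/

open scoped InnerProductSpace

/-- `p - q` is orthogonal to `S` and is a combination of elements of `S`, hence to itself. -/
theorem eq_of_residuals_orthogonal {𝕜 E : Type*} [RCLike 𝕜] [NormedAddCommGroup E]
    [InnerProductSpace 𝕜 E] {S : Set E} {x y p q : E} (hp : p ∈ S) (hq : q ∈ S)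
    (hxp : ∀ u ∈ S, ⟪x - p, u⟫_𝕜 = 0) (hyq : ∀ u ∈ S, ⟪y - q, u⟫_𝕜 = 0)
    (hxy : ∀ u ∈ S, ⟪x - y, u⟫_𝕜 = 0) : p = q := by
  have hpq : ∀ u ∈ S, ⟪p - q, u⟫_𝕜 = 0 := by
    intro u hu
    have hsplit : p - q = (x - y) - (x - p) + (y - q) := by abel
    rw [hsplit, inner_add_left, inner_sub_left, hxy u hu, hxp u hu, hyq u hu]
    simp
  rw [← sub_eq_zero, ← inner_self_eq_zero (𝕜 := 𝕜), inner_sub_right, hpq p hp, hpq q hq,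
    sub_zero]

section ValuationSeries

variable {ord : H → ℕ∞}

theorem min_le_ord_sub (hsmul : ∀ (c : ℂ) (x : H), c ≠ 0 → ord (c • x) = ord x)
    (hadd : ∀ x y : H, min (ord x) (ord y) ≤ ord (x + y)) (x y : H) :
    min (ord x) (ord y) ≤ ord (x - y) := by
  have hneg : ord (-y) = ord y := by simpa using hsmul (-1) y (by norm_num)
  simpa [sub_eq_add_neg, hneg] using hadd x (-y)

def valSubmodule (hord0 : ord 0 = ⊤) (hsmul : ∀ (c : ℂ) (x : H), c ≠ 0 → ord (c • x) = ord x)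
    (hadd : ∀ x y : H, min (ord x) (ord y) ≤ ord (x + y)) (V : Submodule ℂ H) (k : ℕ) :
    Submodule ℂ H where
  carrier := valSeries ord V k
  add_mem' := fun ⟨haV, ha⟩ ⟨hbV, hb⟩ => ⟨V.add_mem haV hbV, (le_min ha hb).trans (hadd _ _)⟩
  zero_mem' := ⟨V.zero_mem, hord0 ▸ le_top⟩
  smul_mem' c a := fun ⟨haV, ha⟩ => by
    refine ⟨V.smul_mem c haV, ?_⟩
    rcases eq_or_ne c 0 with rfl | hc
    · simp [hord0]
    · rwa [hsmul c a hc]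

theorem isClosed_valSeries (husc : UpperSemicontinuous ord) {V : Submodule ℂ H}
    (hV : IsClosed (V : Set H)) (k : ℕ) : IsClosed (valSeries ord V k) :=
  hV.inter (husc.isClosed_preimage (k : ℕ∞))

/-- `y` is the orthogonal projection of `x` onto the closed subspace `V_{m+1}`. -/
theorem exists_sub_mem_nearHomog [CompleteSpace H] (hord0 : ord 0 = ⊤)
    (hsmul : ∀ (c : ℂ) (x : H), c ≠ 0 → ord (c • x) = ord x)
    (hadd : ∀ x y : H, min (ord x) (ord y) ≤ ord (x + y)) (husc : UpperSemicontinuous ord)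
    {V : Submodule ℂ H} (hV : IsClosed (V : Set H)) {m : ℕ} {x : H} (hx : x ∈ V)
    (hm : (m : ℕ∞) ≤ ord x) :
    ∃ y ∈ valSeries ord V (m + 1), x - y ∈ nearHomog ord V m := by
  set K := valSubmodule hord0 hsmul hadd V (m + 1)
  have : CompleteSpace K := (isClosed_valSeries husc hV (m + 1)).completeSpace_coe
  obtain ⟨hyV, hy⟩ : K.starProjection x ∈ valSeries ord V (m + 1) :=
    (K.orthogonalProjectionOnto x).2
  refine ⟨K.starProjection x, ⟨hyV, hy⟩, ⟨V.sub_mem hx hyV, ?_⟩,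
    fun z hz => K.starProjection_inner_eq_zero x z hz⟩
  calc (m : ℕ∞) ≤ min (ord x) (ord (K.starProjection x)) :=
        le_min hm (le_trans (by exact_mod_cast m.le_succ) hy)
    _ ≤ _ := min_le_ord_sub hsmul hadd _ _

theorem projection_mem_image_nearHomog [CompleteSpace H] (hord0 : ord 0 = ⊤)
    (hsmul : ∀ (c : ℂ) (x : H), c ≠ 0 → ord (c • x) = ord x)
    (hadd : ∀ x y : H, min (ord x) (ord y) ≤ ord (x + y)) (husc : UpperSemicontinuous ord)
    {PH : ℕ → H → H}
    (hPH : ∀ (m : ℕ) (x : H), PH m x ∈ nearHomog ord (⊤ : Submodule ℂ H) m ∧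
      ∀ w ∈ nearHomog ord (⊤ : Submodule ℂ H) m, ⟪x - PH m x, w⟫_ℂ = 0)
    {V : Submodule ℂ H} (hV : IsClosed (V : Set H)) {m : ℕ} {x : H} (hx : x ∈ V)
    (hm : (m : ℕ∞) ≤ ord x) :
    PH m x ∈ PH m '' nearHomog ord V m := by
  obtain ⟨y, ⟨-, hy⟩, hw⟩ := exists_sub_mem_nearHomog hord0 hsmul hadd husc hV hx hm
  refine ⟨x - y, hw, eq_of_residuals_orthogonal (hPH m _).1 (hPH m x).1 (hPH m _).2
    (hPH m x).2 fun u hu => ?_⟩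
  -- `u ∈ H_m` is orthogonal to `H_{m+1} ∋ y`
  rw [sub_sub_cancel_left, inner_neg_left, neg_eq_zero, inner_eq_zero_symm]
  exact hu.2 y ⟨Submodule.mem_top, hy⟩

end ValuationSeries

theorem invariant_implies_fullProjection_general
    {R : Type*} [Ring R] [CompleteSpace H]
    [Module R H]
    (ordR : R → ℕ∞) (ord : H → ℕ∞)
    (h0 : ∀ x : H, ord x = ⊤ ↔ x = 0)
    (hsmul : ∀ (c : ℂ) (x : H), c ≠ 0 → ord (c • x) = ord x)
    (hadd : ∀ x y : H, min (ord x) (ord y) ≤ ord (x + y))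
    (husc : UpperSemicontinuous ord)
    -- `PH m` is the orthogonal projection of `H` onto the component `H_m`
    (PH : ℕ → H → H)
    (hPH : ∀ (m : ℕ) (x : H), PH m x ∈ nearHomog ord (⊤ : Submodule ℂ H) m ∧
      ∀ w ∈ nearHomog ord (⊤ : Submodule ℂ H) m, (inner ℂ (x - PH m x) w : ℂ) = 0)
    (V : Submodule ℂ H) (hVc : IsClosed (V : Set H))
    (hinv : ∀ r : R, 1 ≤ ordR r → ∀ v ∈ V, r • v ∈ V) :
    ∀ (k m : ℕ), ∀ r : R, 1 ≤ ordR r → ∀ h ∈ nearHomog ord V k, ∀ g ∈ V,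
      (m : ℕ∞) ≤ ord (r • h + g) →
      PH m (r • h + g) ∈ PH m '' (nearHomog ord V m) := by
  intro k m r hr h hh g hg hord
  exact projection_mem_image_nearHomog ((h0 0).mpr rfl) hsmul hadd husc hPH hVc
    (V.add_mem (hinv r hr h hh.1.1) hg) hord

/-- if `V` is a closed `R₁`-invariant subspace, then its near
homogeneous decomposition has the full projection property. -/
theorem invariant_implies_fullProjection
    {R : Type*} [Ring R] [Algebra ℂ R] [CompleteSpace H]
    [Module R H] [IsScalarTower ℂ R H]
    (ordR : R → ℕ∞) (ord : H → ℕ∞)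
    (hR0 : ∀ r : R, ordR r = ⊤ ↔ r = 0)
    (hRmul : ∀ r s : R, ordR r + ordR s ≤ ordR (r * s))
    (hRsmul : ∀ (c : ℂ) (r : R), c ≠ 0 → ordR (c • r) = ordR r)
    (hRadd : ∀ r s : R, min (ordR r) (ordR s) ≤ ordR (r + s))
    (h0 : ∀ x : H, ord x = ⊤ ↔ x = 0)
    (hmul : ∀ (r : R) (x : H), ordR r + ord x ≤ ord (r • x))
    (hsmul : ∀ (c : ℂ) (x : H), c ≠ 0 → ord (c • x) = ord x)
    (hadd : ∀ x y : H, min (ord x) (ord y) ≤ ord (x + y))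
    (husc : UpperSemicontinuous ord)
    -- `PH m` is the orthogonal projection of `H` onto the component `H_m`
    (PH : ℕ → H → H)
    (hPH : ∀ (m : ℕ) (x : H), PH m x ∈ nearHomog ord (⊤ : Submodule ℂ H) m ∧
      ∀ w ∈ nearHomog ord (⊤ : Submodule ℂ H) m, (inner ℂ (x - PH m x) w : ℂ) = 0)
    (V : Submodule ℂ H) (hVc : IsClosed (V : Set H))
    (hinv : ∀ r : R, 1 ≤ ordR r → ∀ v ∈ V, r • v ∈ V) :
    ∀ (k m : ℕ), ∀ r : R, 1 ≤ ordR r → ∀ h ∈ nearHomog ord V k, ∀ g ∈ V,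
      (m : ℕ∞) ≤ ord (r • h + g) →
      PH m (r • h + g) ∈ PH m '' (nearHomog ord V m) :=
  invariant_implies_fullProjection_general ordR ord h0 hsmul hadd husc PH hPH V hVc hinv
end

section
/- (Abstract Beurling's theorem) Let V be a closed subspace of a valuation Hilbert module H over a valuation algebra R. Then V is R₁-invariant (R₁·V ⊆ V) if and only if the near homogeneous decomposition of V is near inner and has the full projection property. -/
variable {H : Type*} [NormedAddCommGroup H] [InnerProductSpace ℂ H]

/-!
If `V` is `R₁`-invariant, `r • h + g` lies in `V`: near innerness is then the definition of `W_m`,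
and splitting `r • h + g ∈ V_m` as `w + y` with `w ∈ W_m`, `y ∈ V_{m+1} ⊆ H_{m+1}` gives
`P_m (r • h + g) = P_m w`.

Conversely, fix `z = r • h` with `h ∈ W_k`. The full projection property lets one subtract from
`z` successive corrections in `W_0, W_1, …` of `V`, giving `g_n ∈ V` with `ord (z + g_n) ≥ n`.
Near innerness makes `z + g_q` orthogonal to every earlier correction `g_p - g_q`, so by Pythagoras
the norms `‖z + g_n‖` decrease and the sequence is Cauchy; its limit has infinite order by upper
semicontinuity, hence vanishes, and `z = -lim g_n ∈ V`. Finally a vector of `V` orthogonal to all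
`W_k` lies in every `V_k`, hence is `0`; so the `W_k` span a dense subspace of `V`, and continuity
of `r • ·` gives `r • V ⊆ V`.
-/

open Filter Topology

theorem cauchySeq_of_inner_sub_eq_zero {𝕜 E : Type*} [RCLike 𝕜] [NormedAddCommGroup E]
    [InnerProductSpace 𝕜 E] {x : ℕ → E} (h : ∀ p q, p ≤ q → inner 𝕜 (x q) (x p - x q) = 0) :
    CauchySeq x := by
  have pyth : ∀ p q, p ≤ q → ‖x p‖ ^ 2 = ‖x q‖ ^ 2 + ‖x p - x q‖ ^ 2 := fun p q hpq => by
    simpa [sq] using norm_add_sq_eq_norm_sq_add_norm_sq_of_inner_eq_zero _ _ (h p q hpq)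
  have hanti : Antitone fun n => ‖x n‖ ^ 2 := fun p q hpq => by
    nlinarith [pyth p q hpq, sq_nonneg ‖x p - x q‖]
  have hcauchy : CauchySeq fun n => ‖x n‖ ^ 2 :=
    (tendsto_atTop_ciInf hanti ⟨0, by rintro _ ⟨n, rfl⟩; positivity⟩).cauchySeq
  rw [Metric.cauchySeq_iff'] at hcauchy ⊢
  intro ε hε
  obtain ⟨N, hN⟩ := hcauchy (ε ^ 2) (by positivity)
  refine ⟨N, fun n hn => ?_⟩
  have hsq := hN n hn
  rw [Real.dist_eq, abs_sub_comm, abs_of_nonneg (sub_nonneg.2 (hanti hn))] at hsq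
  rw [dist_comm, dist_eq_norm]
  exact lt_of_pow_lt_pow_left₀ 2 hε.le (by linarith [pyth N n hn])

theorem exists_seq_of_forall_exists_succ {α : Type*} (P : ℕ → α → Prop) (Q : ℕ → α → α → Prop)
    {a : α} (ha : P 0 a) (step : ∀ n x, P n x → ∃ y, P (n + 1) y ∧ Q n x y) :
    ∃ x : ℕ → α, x 0 = a ∧ ∀ n, P n (x n) ∧ Q n (x n) (x (n + 1)) := by
  have step' : ∀ n x, ∃ y, P n x → P (n + 1) y ∧ Q n x y := fun n x =>
    (em (P n x)).elim (fun hx => (step n x hx).imp fun _ hy _ => hy) fun hx => ⟨x, hx.elim⟩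
  choose f hf using step'
  let x : ℕ → α := fun n => Nat.rec a f n
  have hP : ∀ n, P n (x n) := fun n => Nat.rec ha (fun n ih => (hf n (x n) ih).1) n
  exact ⟨x, rfl, fun n => ⟨hP n, (hf n (x n) (hP n)).2⟩⟩

theorem valSeries_succ_subset (ord : H → ℕ∞) (V : Submodule ℂ H) (k : ℕ) :
    valSeries ord V (k + 1) ⊆ valSeries ord V k :=
  fun _ hx => ⟨hx.1, le_trans (by exact_mod_cast k.le_succ) hx.2⟩

-- The axioms of a Hilbert module valuation that involve only complex scalars.
structure IsHilbertValuation (ord : H → ℕ∞) : Prop where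
  eq_top_iff : ∀ x, ord x = ⊤ ↔ x = 0
  smul_eq : ∀ (c : ℂ) (x : H), c ≠ 0 → ord (c • x) = ord x
  min_le_add : ∀ x y, min (ord x) (ord y) ≤ ord (x + y)
  upperSemicontinuous : UpperSemicontinuous ord

namespace IsHilbertValuation

variable {ord : H → ℕ∞} (hv : IsHilbertValuation ord)
include hv

theorem map_zero : ord 0 = ⊤ := (hv.eq_top_iff 0).2 rfl

theorem map_neg (x : H) : ord (-x) = ord x := by
  simpa using hv.smul_eq (-1) x (by norm_num)

theorem min_le_sub (x y : H) : min (ord x) (ord y) ≤ ord (x - y) := by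
  simpa [sub_eq_add_neg, hv.map_neg] using hv.min_le_add x (-y)

theorem isClosed_setOf_le (m : ℕ∞) : IsClosed {x : H | m ≤ ord x} :=
  hv.upperSemicontinuous.isClosed_preimage m

theorem eq_zero_of_tendsto {x : ℕ → H} {L : H} (hx : Tendsto x atTop (𝓝 L))
    (hord : ∀ n : ℕ, ∀ᶠ i in atTop, (n : ℕ∞) ≤ ord (x i)) : L = 0 :=
  (hv.eq_top_iff L).1 <| ENat.eq_top_iff_forall_ge.2 fun n =>
    (hv.isClosed_setOf_le n).mem_of_tendsto hx (hord n)

def valSubmodule (V : Submodule ℂ H) (k : ℕ) : Submodule ℂ H where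
  carrier := valSeries ord V k
  zero_mem' := ⟨V.zero_mem, hv.map_zero ▸ le_top⟩
  add_mem' hx hy := ⟨V.add_mem hx.1 hy.1, (le_min hx.2 hy.2).trans (hv.min_le_add _ _)⟩
  smul_mem' c x hx := by
    refine ⟨V.smul_mem c hx.1, ?_⟩
    rcases eq_or_ne c 0 with rfl | hc
    · simp [hv.map_zero]
    · exact (hv.smul_eq c x hc).symm ▸ hx.2

theorem isClosed_valSeries {V : Submodule ℂ H} (hVc : IsClosed (V : Set H)) (k : ℕ) :
    IsClosed (valSeries ord V k) :=
  hVc.inter (hv.isClosed_setOf_le k)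

noncomputable def nearHomogSubmodule (V : Submodule ℂ H) (k : ℕ) : Submodule ℂ H :=
  hv.valSubmodule V k ⊓ (hv.valSubmodule V (k + 1))ᗮ

theorem mem_nearHomogSubmodule {V : Submodule ℂ H} {k : ℕ} {x : H} :
    x ∈ hv.nearHomogSubmodule V k ↔ x ∈ nearHomog ord V k :=
  and_congr_right fun _ => Submodule.mem_orthogonal' _ x

theorem exists_add_of_mem_valSeries [CompleteSpace H] {V : Submodule ℂ H}
    (hVc : IsClosed (V : Set H)) {m : ℕ} {x : H} (hx : x ∈ valSeries ord V m) :
    ∃ w ∈ nearHomog ord V m, ∃ y ∈ valSeries ord V (m + 1), x = w + y := by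
  let K := hv.valSubmodule V (m + 1)
  have : CompleteSpace K := (hv.isClosed_valSeries hVc (m + 1)).completeSpace_coe
  have hy : K.starProjection x ∈ valSeries ord V (m + 1) := K.starProjection_apply_mem x
  refine ⟨x - K.starProjection x, hv.mem_nearHomogSubmodule.1 ⟨?_, ?_⟩, _, hy, by abel⟩
  · exact (hv.valSubmodule V m).sub_mem hx (valSeries_succ_subset ord V m hy)
  · exact K.sub_starProjection_mem_orthogonal x

theorem mem_valSeries_succ_of_inner_eq_zero [CompleteSpace H] {V : Submodule ℂ H}
    (hVc : IsClosed (V : Set H)) {m : ℕ} {x : H} (hx : x ∈ valSeries ord V m)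
    (horth : ∀ w ∈ nearHomog ord V m, inner ℂ x w = 0) : x ∈ valSeries ord V (m + 1) := by
  obtain ⟨w, hw, y, hy, rfl⟩ := hv.exists_add_of_mem_valSeries hVc hx
  have hw0 : w = 0 := by
    have hww := horth w hw
    rwa [inner_add_left, inner_eq_zero_symm.1 (hw.2 y hy), add_zero, inner_self_eq_zero] at hww
  simpa [hw0] using hy

theorem eq_zero_of_forall_inner_nearHomog [CompleteSpace H] {V : Submodule ℂ H}
    (hVc : IsClosed (V : Set H)) {x : H} (hx : x ∈ V)
    (horth : ∀ k, ∀ w ∈ nearHomog ord V k, inner ℂ x w = 0) : x = 0 := by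
  have hmem : ∀ k, x ∈ valSeries ord V k := fun k =>
    Nat.rec ⟨hx, by simp⟩ (fun k ih => hv.mem_valSeries_succ_of_inner_eq_zero hVc ih (horth k)) k
  exact (hv.eq_top_iff x).1 (ENat.eq_top_iff_forall_ge.2 fun k => (hmem k).2)

theorem le_topologicalClosure_iSup_nearHomogSubmodule [CompleteSpace H] {V : Submodule ℂ H}
    (hVc : IsClosed (V : Set H)) :
    V ≤ (⨆ k, hv.nearHomogSubmodule V k).topologicalClosure := by
  set K := (⨆ k, hv.nearHomogSubmodule V k).topologicalClosure
  have hKV : K ≤ V := Submodule.topologicalClosure_minimal _ (iSup_le fun k _ hx => hx.1.1) hVc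
  intro z hz
  have hperp := K.sub_starProjection_mem_orthogonal z
  have hz0 : z - K.starProjection z = 0 :=
    hv.eq_zero_of_forall_inner_nearHomog hVc (V.sub_mem hz (hKV (K.starProjection_apply_mem z)))
      fun k _ hw => Submodule.inner_left_of_mem_orthogonal (Submodule.le_topologicalClosure _
        (Submodule.mem_iSup_of_mem k (hv.mem_nearHomogSubmodule.2 hw))) hperp
  rw [sub_eq_zero] at hz0
  exact hz0 ▸ K.starProjection_apply_mem z

theorem smul_mem_of_forall_nearHomog {R : Type*} [DistribSMul R H] [CompleteSpace H]
    {V : Submodule ℂ H} (hVc : IsClosed (V : Set H)) {r : R} (hr : Continuous (r • · : H → H))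
    (h : ∀ k, ∀ x ∈ nearHomog ord V k, r • x ∈ V) {v : H} (hvV : v ∈ V) : r • v ∈ V := by
  let S : Set H := {x | r • x ∈ V}
  have hsup : ((⨆ k, hv.nearHomogSubmodule V k : Submodule ℂ H) : Set H) ⊆ S := fun x hx =>
    Submodule.iSup_induction _ (motive := (· ∈ S)) hx
      (fun k x hx => h k x (hv.mem_nearHomogSubmodule.1 hx)) (by simp [S])
      fun x y hx hy => by simpa only [S, Set.mem_ofPred_eq, smul_add] using V.add_mem hx hy
  have hclosure := closure_minimal hsup (hVc.preimage hr)
  rw [← Submodule.topologicalClosure_coe] at hclosure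
  exact hclosure (hv.le_topologicalClosure_iSup_nearHomogSubmodule hVc hvV)

section Projection

variable {PH : ℕ → H → H}
  (hPH : ∀ (m : ℕ) (x : H), PH m x ∈ nearHomog ord (⊤ : Submodule ℂ H) m ∧
      ∀ w ∈ nearHomog ord (⊤ : Submodule ℂ H) m, (inner ℂ (x - PH m x) w : ℂ) = 0)
include hPH

theorem proj_eq_proj_iff {m : ℕ} {x y : H} :
    PH m x = PH m y ↔ ∀ w ∈ nearHomog ord ⊤ m, inner ℂ (x - y) w = 0 := by
  have hsplit : x - y = (x - PH m x) - (y - PH m y) + (PH m x - PH m y) := by abel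
  constructor
  · intro hxy w hw
    rw [hsplit, inner_add_left, inner_sub_left, (hPH m x).2 w hw, (hPH m y).2 w hw, hxy,
      sub_self, sub_self, inner_zero_left, add_zero]
  · intro horth
    have hd : PH m x - PH m y ∈ nearHomog ord ⊤ m := hv.mem_nearHomogSubmodule.1 <|
      sub_mem (hv.mem_nearHomogSubmodule.2 (hPH m x).1) (hv.mem_nearHomogSubmodule.2 (hPH m y).1)
    have hdd := horth _ hd
    rwa [hsplit, inner_add_left, inner_sub_left, (hPH m x).2 _ hd, (hPH m y).2 _ hd, sub_zero,
      zero_add, inner_self_eq_zero, sub_eq_zero] at hdd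

theorem proj_mem_image_nearHomog [CompleteSpace H] {V : Submodule ℂ H}
    (hVc : IsClosed (V : Set H)) {m : ℕ} {x : H} (hx : x ∈ valSeries ord V m) :
    PH m x ∈ PH m '' nearHomog ord V m := by
  obtain ⟨w, hw, y, hy, rfl⟩ := hv.exists_add_of_mem_valSeries hVc hx
  refine ⟨w, hw, (hv.proj_eq_proj_iff hPH).2 fun u hu => ?_⟩
  rw [sub_add_cancel_left, inner_neg_left,
    inner_eq_zero_symm.1 (hu.2 y ⟨Submodule.mem_top, hy.2⟩), neg_zero]

theorem succ_le_ord_sub_of_proj_eq [CompleteSpace H] {V : Submodule ℂ H} {m : ℕ} {x w : H}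
    (hx : (m : ℕ∞) ≤ ord x) (hw : w ∈ nearHomog ord V m) (hxw : PH m x = PH m w) :
    ((m + 1 : ℕ) : ℕ∞) ≤ ord (x - w) :=
  (hv.mem_valSeries_succ_of_inner_eq_zero (by simp)
    ⟨Submodule.mem_top, (le_min hx hw.1.2).trans (hv.min_le_sub x w)⟩
    ((hv.proj_eq_proj_iff hPH).1 hxw)).2

theorem mem_of_forall_nearInner_of_forall_fullProj [CompleteSpace H] {V : Submodule ℂ H}
    (hVc : IsClosed (V : Set H)) {z : H}
    (hnear : ∀ m : ℕ, ∀ g ∈ V, (m : ℕ∞) < ord (z + g) →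
      ∀ w ∈ nearHomog ord V m, inner ℂ (z + g) w = 0)
    (hfull : ∀ m : ℕ, ∀ g ∈ V, (m : ℕ∞) ≤ ord (z + g) →
      PH m (z + g) ∈ PH m '' nearHomog ord V m) :
    z ∈ V := by
  obtain ⟨g, -, hg⟩ := exists_seq_of_forall_exists_succ
    (fun n g => g ∈ V ∧ (n : ℕ∞) ≤ ord (z + g)) (fun n g g' => g - g' ∈ nearHomog ord V n)
    ⟨V.zero_mem, by simp⟩ fun n g ⟨hgV, hgn⟩ => by
      obtain ⟨w, hw, hproj⟩ := hfull n g hgV hgn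
      refine ⟨g - w, ⟨V.sub_mem hgV hw.1.1, ?_⟩, by simpa using hw⟩
      rw [← add_sub_assoc]
      exact hv.succ_le_ord_sub_of_proj_eq hPH hgn hw hproj.symm
  have horth : ∀ p q, p ≤ q → inner ℂ (z + g q) ((z + g p) - (z + g q)) = 0 := by
    intro p q hpq
    rw [add_sub_add_left_eq_sub]
    induction hpq using Nat.decreasingInduction with
    | self => simp
    | of_succ p hpq ih =>
      rw [← sub_add_sub_cancel (g p) (g (p + 1)) (g q), inner_add_right, ih, add_zero]
      exact hnear p _ (hg q).1.1 (lt_of_lt_of_le (by exact_mod_cast hpq) (hg q).1.2) _ (hg p).2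
  obtain ⟨L, hL⟩ := cauchySeq_tendsto_of_complete (cauchySeq_of_inner_sub_eq_zero horth)
  have hL0 : L = 0 := hv.eq_zero_of_tendsto hL fun n =>
    eventually_atTop.2 ⟨n, fun i hi => le_trans (by exact_mod_cast hi) (hg i).1.2⟩
  have hg_lim : Tendsto g atTop (𝓝 (-z)) := by simpa [hL0] using hL.sub_const z
  simpa using V.neg_mem (hVc.mem_of_tendsto hg_lim (Eventually.of_forall fun n => (hg n).1.1))

end Projection

end IsHilbertValuation

theorem abstract_beurling_general
    {R : Type*} [Ring R] [CompleteSpace H]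
    [Module R H]
    (ordR : R → ℕ∞) (ord : H → ℕ∞)
    (h0 : ∀ x : H, ord x = ⊤ ↔ x = 0)
    (hsmul : ∀ (c : ℂ) (x : H), c ≠ 0 → ord (c • x) = ord x)
    (hadd : ∀ x y : H, min (ord x) (ord y) ≤ ord (x + y))
    (husc : UpperSemicontinuous ord)
    -- multiplication by each element of `R` is bounded (continuous)
    (hcont : ∀ r : R, Continuous fun x : H => r • x)
    -- `PH m` is the orthogonal projection of `H` onto the component `H_m`
    (PH : ℕ → H → H)
    (hPH : ∀ (m : ℕ) (x : H), PH m x ∈ nearHomog ord (⊤ : Submodule ℂ H) m ∧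
      ∀ w ∈ nearHomog ord (⊤ : Submodule ℂ H) m, (inner ℂ (x - PH m x) w : ℂ) = 0)
    (V : Submodule ℂ H) (hVc : IsClosed (V : Set H)) :
    (∀ r : R, 1 ≤ ordR r → ∀ v ∈ V, r • v ∈ V) ↔
      ((∀ (k m : ℕ), ∀ h ∈ nearHomog ord V k, ∀ g ∈ V, ∀ r : R, 1 ≤ ordR r →
          (m : ℕ∞) < ord (r • h + g) →
          ∀ w ∈ nearHomog ord V m, (inner ℂ (r • h + g) w : ℂ) = 0) ∧
        (∀ (k m : ℕ), ∀ r : R, 1 ≤ ordR r → ∀ h ∈ nearHomog ord V k, ∀ g ∈ V,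
          (m : ℕ∞) ≤ ord (r • h + g) →
          PH m (r • h + g) ∈ PH m '' (nearHomog ord V m))) := by
  have hv : IsHilbertValuation ord := ⟨h0, hsmul, hadd, husc⟩
  refine ⟨fun hinv => ⟨?_, ?_⟩, fun ⟨hnear, hfull⟩ r hr _ hvV => ?_⟩
  · intro k m h hh g hg r hr hm w hw
    have hm' : ((m + 1 : ℕ) : ℕ∞) ≤ ord (r • h + g) := by exact_mod_cast Order.add_one_le_of_lt hm
    exact inner_eq_zero_symm.1 (hw.2 _ ⟨V.add_mem (hinv r hr h hh.1.1) hg, hm'⟩)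
  · intro k m r hr h hh g hg hm
    exact hv.proj_mem_image_nearHomog hPH hVc ⟨V.add_mem (hinv r hr h hh.1.1) hg, hm⟩
  · refine hv.smul_mem_of_forall_nearHomog hVc (hcont r) (fun k h hh => ?_) hvV
    exact hv.mem_of_forall_nearInner_of_forall_fullProj hPH hVc
      (fun m g hg => hnear k m h hh g hg r hr) (fun m g hg => hfull k m r hr h hh g hg)

/-- abstract Beurling's theorem: a closed subspace `V` of a
valuation Hilbert module is `R₁`-invariant if and only if its near homogeneous
decomposition is near inner and has the full projection property. -/
theorem abstract_beurling
    {R : Type*} [Ring R] [Algebra ℂ R] [CompleteSpace H]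
    [Module R H] [IsScalarTower ℂ R H]
    (ordR : R → ℕ∞) (ord : H → ℕ∞)
    (hR0 : ∀ r : R, ordR r = ⊤ ↔ r = 0)
    (hRmul : ∀ r s : R, ordR r + ordR s ≤ ordR (r * s))
    (hRsmul : ∀ (c : ℂ) (r : R), c ≠ 0 → ordR (c • r) = ordR r)
    (hRadd : ∀ r s : R, min (ordR r) (ordR s) ≤ ordR (r + s))
    (h0 : ∀ x : H, ord x = ⊤ ↔ x = 0)
    (hmul : ∀ (r : R) (x : H), ordR r + ord x ≤ ord (r • x))
    (hsmul : ∀ (c : ℂ) (x : H), c ≠ 0 → ord (c • x) = ord x)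
    (hadd : ∀ x y : H, min (ord x) (ord y) ≤ ord (x + y))
    (husc : UpperSemicontinuous ord)
    -- multiplication by each element of `R` is bounded (continuous)
    (hcont : ∀ r : R, Continuous fun x : H => r • x)
    -- `PH m` is the orthogonal projection of `H` onto the component `H_m`
    (PH : ℕ → H → H)
    (hPH : ∀ (m : ℕ) (x : H), PH m x ∈ nearHomog ord (⊤ : Submodule ℂ H) m ∧
      ∀ w ∈ nearHomog ord (⊤ : Submodule ℂ H) m, (inner ℂ (x - PH m x) w : ℂ) = 0)
    (V : Submodule ℂ H) (hVc : IsClosed (V : Set H)) :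
    (∀ r : R, 1 ≤ ordR r → ∀ v ∈ V, r • v ∈ V) ↔
      ((∀ (k m : ℕ), ∀ h ∈ nearHomog ord V k, ∀ g ∈ V, ∀ r : R, 1 ≤ ordR r →
          (m : ℕ∞) < ord (r • h + g) →
          ∀ w ∈ nearHomog ord V m, (inner ℂ (r • h + g) w : ℂ) = 0) ∧
        (∀ (k m : ℕ), ∀ r : R, 1 ≤ ordR r → ∀ h ∈ nearHomog ord V k, ∀ g ∈ V,
          (m : ℕ∞) ≤ ord (r • h + g) →
          PH m (r • h + g) ∈ PH m '' (nearHomog ord V m))) :=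
  abstract_beurling_general ordR ord h0 hsmul hadd husc hcont PH hPH V hVc
end
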